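/- For every γ > 0 there is a constant C_γ such that for all ν ∈ (0,1], A > 0 and M ≥ 0: ∫_{ℝ²} (min((|q₁|/A)^γ, (|q₁|/A)^{-γ})) / (ν·q₁² + q₂² + M·ν·q₁²) dq ≤ C_γ · ν^{-1/2} / (1 ∨ M^{1/2}). -/

import Mathlib

/-!
With `B = (1 + M) ν` the denominator is `B q₁² + q₂²`. Integrating out `q₂` gives
`π / (√B |q₁|)`, so the integral is `π / √B` times `∫ φ(|q₁| / A) / |q₁| dq₁`,
with `φ u = min (u ^ γ) (u ^ (-γ))`. The measure `dq₁ / |q₁|` is dilation invariant, so this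
does not depend on `A`; splitting at `1` it equals `4 / γ`. Hence the integral is exactly
`4π / (γ √ν √(1 + M))`, and `√(1 + M) ≥ max 1 √M`.
-/

open MeasureTheory Real Set

lemma inv_add_sq_eq (b : ℝ) (hb : 0 < b) (y : ℝ) :
    (b + y ^ 2)⁻¹ = b⁻¹ * (1 + (y / √b) ^ 2)⁻¹ := by
  have : 0 < b + y ^ 2 := by positivity
  rw [div_pow, sq_sqrt hb.le]
  field_simp

lemma integrable_inv_add_sq {b : ℝ} (hb : 0 < b) :
    Integrable fun y : ℝ ↦ (b + y ^ 2)⁻¹ := by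
  simp_rw [inv_add_sq_eq b hb]
  exact (integrable_inv_one_add_sq.const_mul b⁻¹).comp_div (sqrt_ne_zero'.mpr hb)

lemma integral_inv_add_sq {b : ℝ} (hb : 0 < b) :
    ∫ y : ℝ, (b + y ^ 2)⁻¹ = π / √b := by
  simp_rw [inv_add_sq_eq b hb]
  rw [Measure.integral_comp_div (fun t ↦ b⁻¹ * (1 + t ^ 2)⁻¹), integral_const_mul,
    integral_univ_inv_one_add_sq, abs_of_pos (sqrt_pos.mpr hb), smul_eq_mul]
  have : √b * √b = b := mul_self_sqrt hb.le
  field_simp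
  linarith

lemma integrable_div_mul_sq_add_sq {B x : ℝ} (hB : 0 < B) (hx : x ≠ 0) (c : ℝ) :
    Integrable fun y : ℝ ↦ c / (B * x ^ 2 + y ^ 2) := by
  simp_rw [div_eq_mul_inv]
  exact (integrable_inv_add_sq (by positivity)).const_mul c

lemma integral_div_mul_sq_add_sq {B x : ℝ} (hB : 0 < B) (hx : x ≠ 0) (c : ℝ) :
    ∫ y : ℝ, c / (B * x ^ 2 + y ^ 2) = π / √B * (c / |x|) := by
  simp_rw [div_eq_mul_inv c]
  rw [integral_const_mul, integral_inv_add_sq (by positivity), sqrt_mul hB.le,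
    sqrt_sq_eq_abs]
  have : |x| ≠ 0 := abs_ne_zero.mpr hx
  field_simp

lemma integral_prod_div_mul_sq_add_sq {m : ℝ → ℝ} (hm : Measurable m)
    (hm_int : Integrable fun x ↦ m x / |x|) {B : ℝ} (hB : 0 < B) :
    ∫ q : ℝ × ℝ, m q.1 / (B * q.1 ^ 2 + q.2 ^ 2) = π / √B * ∫ x, m x / |x| := by
  have hfiber :
      ∀ᵐ x : ℝ, ∀ c, ∫ y : ℝ, c / (B * x ^ 2 + y ^ 2) = π / √B * (c / |x|) := by
    filter_upwards [Measure.ae_ne volume 0] with x hx c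
    exact integral_div_mul_sq_add_sq hB hx c
  have hint : Integrable (fun q : ℝ × ℝ ↦ m q.1 / (B * q.1 ^ 2 + q.2 ^ 2))
      (volume.prod volume) := by
    have hmeas : Measurable fun q : ℝ × ℝ ↦ m q.1 / (B * q.1 ^ 2 + q.2 ^ 2) :=
      (hm.comp measurable_fst).div (by fun_prop)
    refine (integrable_prod_iff hmeas.aestronglyMeasurable).mpr ⟨?_, ?_⟩
    · filter_upwards [Measure.ae_ne volume 0] with x hx
      exact integrable_div_mul_sq_add_sq hB hx (m x)
    · refine (hm_int.norm.const_mul (π / √B)).congr ?_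
      filter_upwards [hfiber] with x hx
      have hden : ∀ y : ℝ, |B * x ^ 2 + y ^ 2| = B * x ^ 2 + y ^ 2 :=
        fun y ↦ abs_of_nonneg (by positivity)
      simp only [norm_div, Real.norm_eq_abs, abs_abs, hden, hx]
  rw [Measure.volume_eq_prod, integral_prod _ hint, ← integral_const_mul]
  exact integral_congr_ae (hfiber.mono fun x hx ↦ hx (m x))

lemma integrable_comp_abs_of_integrableOn_Ioi {f : ℝ → ℝ} (hf : IntegrableOn f (Ioi 0)) :
    Integrable fun x ↦ f |x| := by
  have hIoi : IntegrableOn (fun x ↦ f |x|) (Ioi 0) :=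
    hf.congr_fun (fun x hx ↦ by rw [abs_of_pos hx]) measurableSet_Ioi
  have hIic : IntegrableOn (fun x ↦ f |x|) (Iic 0) := by
    have hneg : MeasurableEmbedding fun x : ℝ ↦ -x := (Homeomorph.neg ℝ).measurableEmbedding
    rw [← Measure.map_neg_eq_self (volume : Measure ℝ), hneg.integrableOn_map_iff]
    simp_rw [Function.comp_def, abs_neg, neg_preimage, neg_Iic, neg_zero]
    exact Iff.mpr integrableOn_Ici_iff_integrableOn_Ioi hIoi
  rw [← integrableOn_univ, ← Iic_union_Ioi (a := (0 : ℝ))]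
  exact hIic.union hIoi

lemma comp_abs_div_div_abs_eq {A : ℝ} (hA : 0 < A) (f : ℝ → ℝ) (x : ℝ) :
    f (|x| / A) / |x| = A⁻¹ * (f |x / A| / |x / A|) := by
  rw [abs_div, abs_of_pos hA, div_div_eq_mul_div]
  field_simp

lemma integrable_comp_abs_div_div_abs {f : ℝ → ℝ} (hf : Integrable fun x ↦ f |x| / |x|)
    {A : ℝ} (hA : 0 < A) : Integrable fun x ↦ f (|x| / A) / |x| := by
  simp_rw [comp_abs_div_div_abs_eq hA]
  exact (hf.comp_div hA.ne').const_mul A⁻¹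

lemma integral_comp_abs_div_div_abs {A : ℝ} (hA : 0 < A) (f : ℝ → ℝ) :
    ∫ x, f (|x| / A) / |x| = ∫ x, f |x| / |x| := by
  simp_rw [comp_abs_div_div_abs_eq hA]
  rw [integral_const_mul, Measure.integral_comp_div (fun u ↦ f |u| / |u|), abs_of_pos hA,
    smul_eq_mul, inv_mul_cancel_left₀ hA.ne']

lemma min_rpow_rpow_neg_div_self_of_le_one {γ : ℝ} (hγ : 0 < γ) {u : ℝ}
    (hu : u ∈ Ioc 0 1) :
    min (u ^ γ) (u ^ (-γ)) / u = u ^ (γ - 1) := by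
  have h : u ^ γ ≤ u ^ (-γ) := rpow_le_rpow_of_exponent_ge hu.1 hu.2 (by linarith)
  rw [min_eq_left h, rpow_sub hu.1, rpow_one]

lemma min_rpow_rpow_neg_div_self_of_one_lt {γ : ℝ} (hγ : 0 < γ) {u : ℝ} (hu : u ∈ Ioi 1) :
    min (u ^ γ) (u ^ (-γ)) / u = u ^ (-γ - 1) := by
  have h : u ^ (-γ) ≤ u ^ γ := rpow_le_rpow_of_exponent_le (le_of_lt hu) (by linarith)
  rw [min_eq_right h, rpow_sub (zero_lt_one.trans hu), rpow_one]

lemma integrableOn_Ioc_min_rpow_rpow_neg_div {γ : ℝ} (hγ : 0 < γ) :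
    IntegrableOn (fun u : ℝ ↦ min (u ^ γ) (u ^ (-γ)) / u) (Ioc 0 1) := by
  refine IntegrableOn.congr_fun ?_
    (fun u hu ↦ (min_rpow_rpow_neg_div_self_of_le_one hγ hu).symm) measurableSet_Ioc
  rw [← intervalIntegrable_iff_integrableOn_Ioc_of_le zero_le_one]
  exact intervalIntegral.intervalIntegrable_rpow' (by linarith)

lemma integrableOn_Ioi_one_min_rpow_rpow_neg_div {γ : ℝ} (hγ : 0 < γ) :
    IntegrableOn (fun u : ℝ ↦ min (u ^ γ) (u ^ (-γ)) / u) (Ioi 1) :=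
  (integrableOn_Ioi_rpow_of_lt (by linarith) zero_lt_one).congr_fun
    (fun u hu ↦ (min_rpow_rpow_neg_div_self_of_one_lt hγ hu).symm) measurableSet_Ioi

lemma integrableOn_Ioi_min_rpow_rpow_neg_div {γ : ℝ} (hγ : 0 < γ) :
    IntegrableOn (fun u : ℝ ↦ min (u ^ γ) (u ^ (-γ)) / u) (Ioi 0) := by
  rw [← Ioc_union_Ioi_eq_Ioi zero_le_one]
  exact (integrableOn_Ioc_min_rpow_rpow_neg_div hγ).union
    (integrableOn_Ioi_one_min_rpow_rpow_neg_div hγ)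

lemma integral_Ioi_min_rpow_rpow_neg_div {γ : ℝ} (hγ : 0 < γ) :
    ∫ u in Ioi 0, min (u ^ γ) (u ^ (-γ)) / u = 2 / γ := by
  rw [← Ioc_union_Ioi_eq_Ioi zero_le_one, setIntegral_union (Ioc_disjoint_Ioi le_rfl)
    measurableSet_Ioi (integrableOn_Ioc_min_rpow_rpow_neg_div hγ)
    (integrableOn_Ioi_one_min_rpow_rpow_neg_div hγ),
    setIntegral_congr_fun measurableSet_Ioc (fun u ↦ min_rpow_rpow_neg_div_self_of_le_one hγ),
    setIntegral_congr_fun measurableSet_Ioi (fun u ↦ min_rpow_rpow_neg_div_self_of_one_lt hγ),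
    ← intervalIntegral.integral_of_le zero_le_one, integral_rpow (Or.inl (by linarith)),
    integral_Ioi_rpow_of_lt (by linarith) zero_lt_one]
  simp only [sub_add_cancel, one_rpow, zero_rpow hγ.ne']
  field_simp
  ring

lemma max_one_sqrt_le_sqrt_one_add {M : ℝ} (hM : 0 ≤ M) : max 1 √M ≤ √(1 + M) :=
  max_le (one_le_sqrt.mpr (by linarith)) (sqrt_le_sqrt (by linarith))

theorem stmt11 (γ : ℝ) (hγ : 0 < γ) :
    ∃ C : ℝ, 0 < C ∧ ∀ ν A M : ℝ, 0 < ν → ν ≤ 1 → 0 < A → 0 ≤ M →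
      (∫ q : ℝ × ℝ,
          min ((|q.1| / A) ^ γ) ((|q.1| / A) ^ (-γ)) /
            (ν * q.1 ^ 2 + q.2 ^ 2 + M * ν * q.1 ^ 2))
        ≤ C * (Real.sqrt ν)⁻¹ / max 1 (Real.sqrt M) := by
  refine ⟨4 * π / γ, by positivity, fun ν A M hν _ hA hM ↦ ?_⟩
  set φ : ℝ → ℝ := fun u ↦ min (u ^ γ) (u ^ (-γ))
  have hφ_int : Integrable fun x ↦ φ |x| / |x| :=
    integrable_comp_abs_of_integrableOn_Ioi (integrableOn_Ioi_min_rpow_rpow_neg_div hγ)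
  have hB : 0 < (1 + M) * ν := by positivity
  have hvalue : (∫ q : ℝ × ℝ, φ (|q.1| / A) / (ν * q.1 ^ 2 + q.2 ^ 2 + M * ν * q.1 ^ 2))
      = 4 * π / γ * (√ν)⁻¹ / √(1 + M) := by
    simp_rw [show ∀ x y : ℝ, ν * x ^ 2 + y ^ 2 + M * ν * x ^ 2 = (1 + M) * ν * x ^ 2 + y ^ 2
      from fun x y ↦ by ring]
    have hφ_meas : Measurable fun x : ℝ ↦ φ (|x| / A) := by fun_prop
    rw [integral_prod_div_mul_sq_add_sq hφ_meas (integrable_comp_abs_div_div_abs hφ_int hA) hB,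
      integral_comp_abs_div_div_abs hA, integral_comp_abs (f := fun u ↦ φ u / u),
      integral_Ioi_min_rpow_rpow_neg_div hγ, sqrt_mul (by linarith)]
    field_simp
    ring
  rw [hvalue]
  gcongr
  exact max_one_sqrt_le_sqrt_one_add hM
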